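/- arXiv:math/0603080 — 5 statements merged into one kernel-verified Lean document; each statement's English description precedes it below -/
import Mathlib

section
/- Let m ≤ -1/2 and f be a solution on [0,∞) of f''' + (m+2) f f'' - (2m+1)(f')^2 = 0 with f(0) = -γ, f''(0) = -1, and f'(t) → 0 as t → ∞. Then f''(t) < 0 and f'(t) > 0 for all t ≥ 0; in particular f is strictly concave, increasing, and f(t) ≥ -γ for all t ≥ 0. -/
/-!
Multiplying by the integrating factor `exp ((m + 2) ∫₀ᵗ f)` turns the equation into
`(f'' · exp ((m + 2) ∫₀ᵗ f))' = (2m + 1) f'² ≤ 0`, so `f''` keeps the sign of `f''(0) = -1`.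
Hence `f'` is strictly decreasing on `[0, ∞)`; since it tends to `0` it stays positive,
and `f` increases from `f(0) = -γ`.
-/

open Set Filter

theorem antitoneOn_mul_exp_integral_of_deriv_add_mul_nonpos {y p : ℝ → ℝ} {a : ℝ}
    (hy : Differentiable ℝ y) (hp : Continuous p)
    (h : ∀ t ≥ a, deriv y t + p t * y t ≤ 0) :
    AntitoneOn (fun t => y t * Real.exp (∫ x in a..t, p x)) (Ici a) := by
  have hderiv : ∀ t, HasDerivAt (fun t => y t * Real.exp (∫ x in a..t, p x))
      ((deriv y t + p t * y t) * Real.exp (∫ x in a..t, p x)) t := by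
    intro t
    have hexp := (hp.integral_hasStrictDerivAt a t).hasDerivAt.exp
    exact ((hy t).hasDerivAt.mul hexp).congr_deriv (by ring)
  apply antitoneOn_of_deriv_nonpos (convex_Ici a)
  · exact fun t _ => (hderiv t).continuousAt.continuousWithinAt
  · exact fun t _ => (hderiv t).differentiableAt.differentiableWithinAt
  · intro t ht
    rw [interior_Ici] at ht
    rw [(hderiv t).deriv]
    exact mul_nonpos_of_nonpos_of_nonneg (h t (le_of_lt ht)) (Real.exp_pos _).le

theorem neg_of_deriv_add_mul_nonpos {y p : ℝ → ℝ} {a : ℝ}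
    (hy : Differentiable ℝ y) (hp : Continuous p)
    (h : ∀ t ≥ a, deriv y t + p t * y t ≤ 0) (ha : y a < 0) :
    ∀ t ≥ a, y t < 0 := by
  intro t ht
  have hle := antitoneOn_mul_exp_integral_of_deriv_add_mul_nonpos hy hp h
    self_mem_Ici (mem_Ici.mpr ht) ht
  simp only [intervalIntegral.integral_same, Real.exp_zero, mul_one] at hle
  exact neg_of_mul_neg_left (hle.trans_lt ha) (Real.exp_pos _).le

theorem StrictAntiOn.lt_of_tendsto_atTop {g : ℝ → ℝ} {a l : ℝ}
    (hg : StrictAntiOn g (Ici a)) (hlim : Tendsto g atTop (nhds l)) :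
    ∀ t ≥ a, l < g t := by
  intro t ht
  have hl : l ≤ g (t + 1) := by
    refine le_of_tendsto hlim ?_
    filter_upwards [eventually_ge_atTop (t + 1)] with s hs
    exact hg.antitoneOn (mem_Ici.mpr (by linarith)) (mem_Ici.mpr (by linarith)) hs
  exact hl.trans_lt (hg (mem_Ici.mpr ht) (mem_Ici.mpr (by linarith)) (by linarith))

theorem stmt_3 (m γ : ℝ) (hm : m ≤ -1/2)
    (f : ℝ → ℝ) (hf : ContDiff ℝ 3 f)
    (hode : ∀ t ≥ (0:ℝ), iteratedDeriv 3 f t + (m + 2) * f t * iteratedDeriv 2 f t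
      - (2 * m + 1) * (deriv f t) ^ 2 = 0)
    (h0 : f 0 = -γ) (h2 : iteratedDeriv 2 f 0 = -1)
    (hlim : Filter.Tendsto (deriv f) Filter.atTop (nhds 0)) :
    ∀ t ≥ (0:ℝ), iteratedDeriv 2 f t < 0 ∧ deriv f t > 0 ∧ f t ≥ -γ := by
  have hd2 : iteratedDeriv 2 f = deriv (deriv f) := by
    rw [iteratedDeriv_succ, iteratedDeriv_one]
  have hd3 : iteratedDeriv 3 f = deriv (iteratedDeriv 2 f) := iteratedDeriv_succ
  have hf'' : ∀ t ≥ (0:ℝ), iteratedDeriv 2 f t < 0 := by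
    refine neg_of_deriv_add_mul_nonpos (p := fun t => (m + 2) * f t)
      (hf.differentiable_iteratedDeriv 2 (by norm_num))
      (continuous_const.mul hf.continuous) (fun t ht => ?_) (by linarith)
    have hsq := mul_nonpos_of_nonpos_of_nonneg (by linarith : 2 * m + 1 ≤ 0)
      (sq_nonneg (deriv f t))
    rw [← hd3]
    linarith [hode t ht]
  have hf'_anti : StrictAntiOn (deriv f) (Ici 0) := by
    refine strictAntiOn_of_deriv_neg (convex_Ici 0)
      (hf.continuous_deriv (by norm_num)).continuousOn fun t ht => ?_
    rw [interior_Ici] at ht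
    exact hd2 ▸ hf'' t (le_of_lt ht)
  have hf' := hf'_anti.lt_of_tendsto_atTop hlim
  have hf_mono : MonotoneOn f (Ici 0) := by
    refine monotoneOn_of_deriv_nonneg (convex_Ici 0) hf.continuous.continuousOn
      (hf.differentiable (by norm_num)).differentiableOn fun t ht => ?_
    rw [interior_Ici] at ht
    exact (hf' t (le_of_lt ht)).le
  intro t ht
  exact ⟨hf'' t ht, hf' t ht, h0 ▸ hf_mono self_mem_Ici (mem_Ici.mpr ht) ht⟩
end

section
/- Let m ≥ -1/2. Every solution f on [0,∞) of f''' + (m+2) f f'' - (2m+1)(f')^2 = 0 satisfying f''(0) = -1 and f'(t) → 0 as t → ∞ is bounded. -/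
/-!
With `k = m + 2 > 0` and `F` the primitive of `f` vanishing at `0`, the equation reads
`(f'' e^{kF})' = (2m+1) f'^2 e^{kF} ≥ 0`, so `J = f'' e^{kF}` is nondecreasing and `J(0) = -1`.
Hence either `f'' < 0` on `[0, ∞)`, so that `f' ↓ 0` and `f` is nondecreasing, or `f''` becomes
nonnegative at some `t₀`, so that `f' ↑ 0` and `f` is nonincreasing on `[t₀, ∞)`.

If `f` is nondecreasing and `f ≥ 1` on `[T, ∞)`, then `F` grows linearly there, so the
lower bound `f'' ≥ -e^{-kF}` decays exponentially; integrating twice against `f' → 0` bounds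
`f` above.
If `f` is nonincreasing and `f ≤ 0` on `[T, ∞)`, then `F` decreases there, so `f'' = J e^{-kF}`
can never become positive (otherwise `f'' ≥ f''(s) > 0` from `s` on, and `f'` would blow up);
thus `f' ↓ 0`, `f' ≥ 0`, and `f` is bounded below by `f(T)`.
-/

open Set Filter Topology Real

section Calculus

variable {g g' g'' : ℝ → ℝ} {a : ℝ}

lemma monotoneOn_Ici_of_hasDerivAt_nonneg (hg : ∀ t, HasDerivAt g (g' t) t)
    (h : ∀ t ≥ a, 0 ≤ g' t) : MonotoneOn g (Ici a) :=
  monotoneOn_of_hasDerivWithinAt_nonneg (convex_Ici a)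
    (fun t _ => (hg t).continuousAt.continuousWithinAt) (fun t _ => (hg t).hasDerivWithinAt)
    (fun t ht => h t (interior_subset ht))

lemma antitoneOn_Ici_of_hasDerivAt_nonpos (hg : ∀ t, HasDerivAt g (g' t) t)
    (h : ∀ t ≥ a, g' t ≤ 0) : AntitoneOn g (Ici a) :=
  antitoneOn_of_hasDerivWithinAt_nonpos (convex_Ici a)
    (fun t _ => (hg t).continuousAt.continuousWithinAt) (fun t _ => (hg t).hasDerivWithinAt)
    (fun t ht => h t (interior_subset ht))

lemma MonotoneOn.le_of_tendsto_Ici (hg : MonotoneOn g (Ici a)) {b : ℝ}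
    (hlim : Tendsto g atTop (𝓝 b)) : ∀ t ≥ a, g t ≤ b := fun t ht =>
  ge_of_tendsto hlim ((eventually_ge_atTop t).mono fun _ hs => hg ht (ht.trans hs) hs)

lemma AntitoneOn.ge_of_tendsto_Ici (hg : AntitoneOn g (Ici a)) {b : ℝ}
    (hlim : Tendsto g atTop (𝓝 b)) : ∀ t ≥ a, b ≤ g t := fun t ht =>
  le_of_tendsto hlim ((eventually_ge_atTop t).mono fun _ hs => hg ht (ht.trans hs) hs)

lemma antitoneOn_Ici_of_deriv2_nonneg (hg : ∀ t, HasDerivAt g (g' t) t)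
    (hg' : ∀ t, HasDerivAt g' (g'' t) t) (hlim : Tendsto g' atTop (𝓝 0))
    (h : ∀ t ≥ a, 0 ≤ g'' t) : AntitoneOn g (Ici a) :=
  antitoneOn_Ici_of_hasDerivAt_nonpos hg
    ((monotoneOn_Ici_of_hasDerivAt_nonneg hg' h).le_of_tendsto_Ici hlim)

lemma monotoneOn_Ici_of_deriv2_nonpos (hg : ∀ t, HasDerivAt g (g' t) t)
    (hg' : ∀ t, HasDerivAt g' (g'' t) t) (hlim : Tendsto g' atTop (𝓝 0))
    (h : ∀ t ≥ a, g'' t ≤ 0) : MonotoneOn g (Ici a) :=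
  monotoneOn_Ici_of_hasDerivAt_nonneg hg
    ((antitoneOn_Ici_of_hasDerivAt_nonpos hg' h).ge_of_tendsto_Ici hlim)

lemma tendsto_atTop_of_hasDerivAt_ge (hg : ∀ t, HasDerivAt g (g' t) t) {ε : ℝ} (hε : 0 < ε)
    (h : ∀ t ≥ a, ε ≤ g' t) : Tendsto g atTop atTop := by
  have hmono : MonotoneOn (fun t => g t - t * ε) (Ici a) :=
    monotoneOn_Ici_of_hasDerivAt_nonneg (fun t => (hg t).sub (hasDerivAt_mul_const ε))
      fun t ht => sub_nonneg.2 (h t ht)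
  refine tendsto_atTop_mono' atTop ((eventually_ge_atTop a).mono fun t ht => ?_)
    (tendsto_atTop_add_const_left _ (g a - a * ε) (tendsto_id.atTop_mul_const hε))
  have := hmono self_mem_Ici ht ht
  simp only [id] at this ⊢
  linarith

lemma monotoneOn_mul_exp_of_deriv_add_mul_nonneg {F f : ℝ → ℝ} {k : ℝ}
    (hg : ∀ t, HasDerivAt g (g' t) t) (hF : ∀ t, HasDerivAt F (f t) t)
    (h : ∀ t ≥ a, 0 ≤ g' t + k * f t * g t) :
    MonotoneOn (fun t => g t * exp (k * F t)) (Ici a) :=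
  monotoneOn_Ici_of_hasDerivAt_nonneg
    (fun t => ((hg t).mul ((hF t).const_mul k).exp).congr_deriv
      (show _ = (g' t + k * f t * g t) * exp (k * F t) by ring))
    fun t ht => mul_nonneg (h t ht) (exp_pos _).le

lemma Continuous.bddAbove_image_Ici {f : ℝ → ℝ} (hf : Continuous f) {T : ℝ}
    (h : BddAbove (f '' Ici T)) : BddAbove (f '' Ici a) := by
  refine ((isCompact_Icc (a := a) (b := T)).image hf |>.bddAbove.union h).mono ?_
  rintro _ ⟨t, ht, rfl⟩
  rcases le_total t T with htT | htT
  exacts [Or.inl ⟨t, ⟨ht, htT⟩, rfl⟩, Or.inr ⟨t, htT, rfl⟩]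

lemma Continuous.bddBelow_image_Ici {f : ℝ → ℝ} (hf : Continuous f) {T : ℝ}
    (h : BddBelow (f '' Ici T)) : BddBelow (f '' Ici a) := by
  refine ((isCompact_Icc (a := a) (b := T)).image hf |>.bddBelow.union h).mono ?_
  rintro _ ⟨t, ht, rfl⟩
  rcases le_total t T with htT | htT
  exacts [Or.inl ⟨t, ⟨ht, htT⟩, rfl⟩, Or.inr ⟨t, htT, rfl⟩]

end Calculus

section IntegratingFactor

variable {k : ℝ} {F f f₁ f₂ : ℝ → ℝ}

lemma monotoneOn_or_exists_antitoneOn (hf : ∀ t, HasDerivAt f (f₁ t) t)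
    (hf₁ : ∀ t, HasDerivAt f₁ (f₂ t) t) (hlim : Tendsto f₁ atTop (𝓝 0))
    (hJ : MonotoneOn (fun t => f₂ t * exp (k * F t)) (Ici 0)) :
    MonotoneOn f (Ici 0) ∨ ∃ t₀ ≥ 0, AntitoneOn f (Ici t₀) := by
  by_cases h : ∃ t₀ ≥ 0, 0 ≤ f₂ t₀
  · obtain ⟨t₀, ht₀, hf₂t₀⟩ := h
    refine Or.inr ⟨t₀, ht₀, antitoneOn_Ici_of_deriv2_nonneg hf hf₁ hlim fun t ht => ?_⟩
    have hJt : 0 ≤ f₂ t * exp (k * F t) :=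
      (mul_nonneg hf₂t₀ (exp_pos _).le).trans (hJ ht₀ (ht₀.trans ht) ht)
    exact nonneg_of_mul_nonneg_left hJt (exp_pos _)
  · push Not at h
    exact Or.inl (monotoneOn_Ici_of_deriv2_nonpos hf hf₁ hlim fun t ht => (h t ht).le)

lemma deriv2_nonpos_of_nonpos (hk : 0 ≤ k) (hF : ∀ t, HasDerivAt F (f t) t)
    (hf₁ : ∀ t, HasDerivAt f₁ (f₂ t) t) (hlim : Tendsto f₁ atTop (𝓝 0))
    (hJ : MonotoneOn (fun t => f₂ t * exp (k * F t)) (Ici 0)) {T : ℝ} (hT : 0 ≤ T)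
    (hfT : ∀ t ≥ T, f t ≤ 0) : ∀ s ≥ T, f₂ s ≤ 0 := by
  intro s hs
  by_contra! hpos
  have hFanti : AntitoneOn F (Ici s) :=
    antitoneOn_Ici_of_hasDerivAt_nonpos hF fun t ht => hfT t (hs.trans ht)
  have hgrow : ∀ t ≥ s, f₂ s ≤ f₂ t := by
    intro t ht
    have hJst : f₂ s * exp (k * F s) ≤ f₂ t * exp (k * F t) :=
      hJ (hT.trans hs) (hT.trans (hs.trans ht)) ht
    have hexp : exp (-(k * F s)) ≤ exp (-(k * F t)) :=
      exp_le_exp.2 (neg_le_neg (mul_le_mul_of_nonneg_left (hFanti self_mem_Ici ht ht) hk))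
    calc f₂ s = f₂ s * exp (k * F s) * exp (-(k * F s)) := by
          rw [exp_neg, mul_inv_cancel_right₀ (exp_pos _).ne']
      _ ≤ f₂ t * exp (k * F t) * exp (-(k * F t)) :=
          mul_le_mul hJst hexp (exp_pos _).le ((mul_pos hpos (exp_pos _)).le.trans hJst)
      _ = f₂ t := by rw [exp_neg, mul_inv_cancel_right₀ (exp_pos _).ne']
  exact not_tendsto_nhds_of_tendsto_atTop (tendsto_atTop_of_hasDerivAt_ge hf₁ hpos hgrow) 0 hlim

lemma bddAbove_image_Ici_of_one_le (hk : 0 < k) (hF : ∀ t, HasDerivAt F (f t) t)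
    (hf : ∀ t, HasDerivAt f (f₁ t) t) (hf₁ : ∀ t, HasDerivAt f₁ (f₂ t) t)
    (hlim : Tendsto f₁ atTop (𝓝 0)) {T : ℝ} (hJ : ∀ t ≥ T, -1 ≤ f₂ t * exp (k * F t))
    (hfT : ∀ t ≥ T, 1 ≤ f t) : BddAbove (f '' Ici T) := by
  have hFgrow : MonotoneOn (fun t => F t - t) (Ici T) :=
    monotoneOn_Ici_of_hasDerivAt_nonneg (fun t => (hF t).sub (hasDerivAt_id t))
      fun t ht => sub_nonneg.2 (hfT t ht)
  set A := exp (k * (T - F T))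
  have hf₂ : ∀ t ≥ T, -(A * exp (-(k * t))) ≤ f₂ t := by
    intro t ht
    have hdecay : exp (-(k * F t)) ≤ A * exp (-(k * t)) := by
      rw [← exp_add, exp_le_exp]
      nlinarith [hFgrow self_mem_Ici ht ht]
    have hJt : -exp (-(k * F t)) ≤ f₂ t := by
      have := mul_le_mul_of_nonneg_right (hJ t ht) (exp_pos (-(k * F t))).le
      rwa [exp_neg, mul_inv_cancel_right₀ (exp_pos _).ne', neg_one_mul, ← exp_neg] at this
    linarith
  -- compare `f` with `A e^{-kt} / k²`, whose second derivative is `A e^{-kt}`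
  have hE : ∀ t, HasDerivAt (fun t => exp (-(k * t))) (-k * exp (-(k * t))) t := fun t =>
    (hasDerivAt_const_mul k).fun_neg.exp.congr_deriv (mul_comm _ _)
  have hh : ∀ t, HasDerivAt (fun t => f t + A / k ^ 2 * exp (-(k * t)))
      (f₁ t - A / k * exp (-(k * t))) t := fun t =>
    ((hf t).add ((hE t).const_mul _)).congr_deriv (by field_simp; ring)
  have hh' : ∀ t, HasDerivAt (fun t => f₁ t - A / k * exp (-(k * t)))
      (f₂ t + A * exp (-(k * t))) t := fun t =>
    ((hf₁ t).sub ((hE t).const_mul _)).congr_deriv (by field_simp; ring)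
  have hlim' : Tendsto (fun t => f₁ t - A / k * exp (-(k * t))) atTop (𝓝 0) := by
    simpa using hlim.sub (((tendsto_exp_neg_atTop_nhds_zero.comp
      (tendsto_id.const_mul_atTop hk)).const_mul (A / k)))
  have hanti := antitoneOn_Ici_of_deriv2_nonneg hh hh' hlim' fun t ht => by linarith [hf₂ t ht]
  refine ⟨f T + A / k ^ 2 * exp (-(k * T)), ?_⟩
  rintro _ ⟨t, ht, rfl⟩
  have := hanti self_mem_Ici ht ht
  have : 0 ≤ A / k ^ 2 * exp (-(k * t)) := by positivity
  linarith

lemma bddAbove_image_Ici_zero (hk : 0 < k) (hF : ∀ t, HasDerivAt F (f t) t)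
    (hf : ∀ t, HasDerivAt f (f₁ t) t) (hf₁ : ∀ t, HasDerivAt f₁ (f₂ t) t)
    (hlim : Tendsto f₁ atTop (𝓝 0))
    (hJ : MonotoneOn (fun t => f₂ t * exp (k * F t)) (Ici 0))
    (hJ₀ : f₂ 0 * exp (k * F 0) = -1) : BddAbove (f '' Ici 0) := by
  have hcont : Continuous f := continuous_iff_continuousAt.2 fun t => (hf t).continuousAt
  rcases monotoneOn_or_exists_antitoneOn hf hf₁ hlim hJ with hmono | ⟨t₀, -, hanti⟩
  · by_cases h : ∃ T ≥ 0, 1 ≤ f T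
    · obtain ⟨T, hT, hfT⟩ := h
      exact hcont.bddAbove_image_Ici (bddAbove_image_Ici_of_one_le hk hF hf hf₁ hlim
        (fun t ht => hJ₀ ▸ hJ self_mem_Ici (hT.trans ht) (hT.trans ht))
        fun t ht => hfT.trans (hmono hT (hT.trans ht) ht))
    · push Not at h
      exact ⟨1, by rintro _ ⟨t, ht, rfl⟩; exact (h t ht).le⟩
  · refine hcont.bddAbove_image_Ici (T := t₀) ⟨f t₀, ?_⟩
    rintro _ ⟨t, ht, rfl⟩
    exact hanti self_mem_Ici ht ht

lemma bddBelow_image_Ici_zero (hk : 0 ≤ k) (hF : ∀ t, HasDerivAt F (f t) t)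
    (hf : ∀ t, HasDerivAt f (f₁ t) t) (hf₁ : ∀ t, HasDerivAt f₁ (f₂ t) t)
    (hlim : Tendsto f₁ atTop (𝓝 0))
    (hJ : MonotoneOn (fun t => f₂ t * exp (k * F t)) (Ici 0)) : BddBelow (f '' Ici 0) := by
  have hcont : Continuous f := continuous_iff_continuousAt.2 fun t => (hf t).continuousAt
  rcases monotoneOn_or_exists_antitoneOn hf hf₁ hlim hJ with hmono | ⟨t₀, ht₀, hanti⟩
  · exact ⟨f 0, by rintro _ ⟨t, ht, rfl⟩; exact hmono self_mem_Ici ht ht⟩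
  · by_cases h : ∃ T ≥ t₀, f T ≤ 0
    · obtain ⟨T, hT, hfT⟩ := h
      have hmonoT : MonotoneOn f (Ici T) := monotoneOn_Ici_of_deriv2_nonpos hf hf₁ hlim
        (deriv2_nonpos_of_nonpos hk hF hf₁ hlim hJ (ht₀.trans hT)
          fun t ht => (hanti hT (hT.trans ht) ht).trans hfT)
      refine hcont.bddBelow_image_Ici (T := T) ⟨f T, ?_⟩
      rintro _ ⟨t, ht, rfl⟩
      exact hmonoT self_mem_Ici ht ht
    · push Not at h
      refine hcont.bddBelow_image_Ici (T := t₀) ⟨0, ?_⟩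
      rintro _ ⟨t, ht, rfl⟩
      exact (h t ht).le

end IntegratingFactor

lemma ContDiff.hasDerivAt_iteratedDeriv {f : ℝ → ℝ} {N : WithTop ℕ∞}
    (hf : ContDiff ℝ N f) {n : ℕ} (hn : n < N) (t : ℝ) :
    HasDerivAt (iteratedDeriv n f) (iteratedDeriv (n + 1) f t) t := by
  rw [iteratedDeriv_succ]
  exact (hf.differentiable_iteratedDeriv n hn t).hasDerivAt

theorem stmt_5 (m : ℝ) (hm : m ≥ -1/2)
    (f : ℝ → ℝ) (hf : ContDiff ℝ 3 f)
    (hode : ∀ t ≥ (0:ℝ), iteratedDeriv 3 f t + (m + 2) * f t * iteratedDeriv 2 f t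
      - (2 * m + 1) * (deriv f t) ^ 2 = 0)
    (h2 : iteratedDeriv 2 f 0 = -1)
    (hlim : Filter.Tendsto (deriv f) Filter.atTop (nhds 0)) :
    ∃ C : ℝ, ∀ t ≥ (0:ℝ), |f t| ≤ C := by
  have hd₀ : ∀ t, HasDerivAt f (deriv f t) t := by
    simpa using hf.hasDerivAt_iteratedDeriv (n := 0) (by norm_num)
  have hd₁ : ∀ t, HasDerivAt (deriv f) (iteratedDeriv 2 f t) t := by
    simpa using hf.hasDerivAt_iteratedDeriv (n := 1) (by norm_num)
  have hd₂ := hf.hasDerivAt_iteratedDeriv (n := 2) (by norm_num)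
  set F := fun t => ∫ s in (0:ℝ)..t, f s
  have hF : ∀ t, HasDerivAt F (f t) t := fun t =>
    ((continuous_iff_continuousAt.2 fun t => (hd₀ t).continuousAt).integral_hasStrictDerivAt
      0 t).hasDerivAt
  have hJ : MonotoneOn (fun t => iteratedDeriv 2 f t * exp ((m + 2) * F t)) (Ici 0) :=
    monotoneOn_mul_exp_of_deriv_add_mul_nonneg hd₂ hF fun t ht => by
      nlinarith [hode t ht, sq_nonneg (deriv f t)]
  have hJ₀ : iteratedDeriv 2 f 0 * exp ((m + 2) * F 0) = -1 := by simp [F, h2]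
  obtain ⟨U, hU⟩ := bddAbove_image_Ici_zero (by linarith) hF hd₀ hd₁ hlim hJ hJ₀
  obtain ⟨L, hL⟩ := bddBelow_image_Ici_zero (by linarith) hF hd₀ hd₁ hlim hJ
  refine ⟨max U (-L), fun t ht => abs_le.2 ⟨?_, ?_⟩⟩
  · linarith [hL (mem_image_of_mem f ht), le_max_right U (-L)]
  · exact (hU (mem_image_of_mem f ht)).trans (le_max_left _ _)
end

section
/- Let f be a positive C³ solution of f''' + (m+2) f f'' - (2m+1)(f')^2 = 0 on an interval around τ. Define s(t) = ∫_τ^t f(ξ)dξ, u(s(t)) = f'(t)/f(t)², v(s(t)) = f''(t)/f(t)³. Then u and v satisfy the plane autonomous system u̇ = v - 2u², v̇ = -(m+2)v + (2m+1)u² - 3uv. -/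
/-! By the quotient rule, `(f'/f²)' = (f f'' - 2f'²)/f³ = f (V - 2U²)` and
`(f''/f³)' = (f f''' - 3f'f'')/f⁴`; substituting `f'''` from the ODE turns the latter into
`f (-(m+2)V + (2m+1)U² - 3UV)`. -/

theorem ContDiffOn.hasDerivAt_iteratedDeriv {𝕜 F : Type*} [NontriviallyNormedField 𝕜]
    [NormedAddCommGroup F] [NormedSpace 𝕜 F] {f : 𝕜 → F} {s : Set 𝕜} {n : WithTop ℕ∞}
    {k : ℕ} {x : 𝕜} (hf : ContDiffOn 𝕜 n f s) (hs : IsOpen s) (hk : k < n) (hx : x ∈ s) :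
    HasDerivAt (iteratedDeriv k f) (iteratedDeriv (k + 1) f x) x := by
  have hmem := hs.mem_nhds hx
  have hdiff : DifferentiableAt 𝕜 (iteratedDeriv k f) x :=
    ((hf.differentiableOn_iteratedDerivWithin hk hs.uniqueDiffOn).differentiableAt
      hmem).congr_of_eventuallyEq
      (Filter.eventuallyEq_of_mem hmem (iteratedDerivWithin_of_isOpen hs)).symm
  rw [iteratedDeriv_succ]
  exact hdiff.hasDerivAt

theorem HasDerivAt.div_pow {𝕜 : Type*} [NontriviallyNormedField 𝕜] {g f : 𝕜 → 𝕜}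
    {g' f' x : 𝕜} (k : ℕ) (hg : HasDerivAt g g' x) (hf : HasDerivAt f f' x) (hx : f x ≠ 0) :
    HasDerivAt (fun y => g y / f y ^ k) ((g' * f x - k * g x * f') / f x ^ (k + 1)) x := by
  refine (hg.div (hf.pow k) (pow_ne_zero k hx)).congr_deriv ?_
  rcases k with _ | k
  · simp [hx]
  · simp only [Pi.pow_apply, Nat.add_sub_cancel]
    field_simp
    ring

/-- Since `ds/dt = f(t) > 0`, the system for `u, v` in the variable `s` is stated in the
chain-rule form for `U = u ∘ s`, `V = v ∘ s` as functions of `t`. -/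
theorem stmt_8_general (m : ℝ) (I : Set ℝ) (hIopen : IsOpen I)
    (f : ℝ → ℝ) (hf : ContDiffOn ℝ 3 f I) (hfpos : ∀ t ∈ I, 0 < f t)
    (hode : ∀ t ∈ I, iteratedDeriv 3 f t + (m + 2) * f t * iteratedDeriv 2 f t
      - (2 * m + 1) * (deriv f t) ^ 2 = 0)
    (U V : ℝ → ℝ)
    (hU : ∀ t ∈ I, U t = deriv f t / (f t) ^ 2)
    (hV : ∀ t ∈ I, V t = iteratedDeriv 2 f t / (f t) ^ 3) :
    ∀ t ∈ I,
      HasDerivAt U (f t * (V t - 2 * (U t) ^ 2)) t ∧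
      HasDerivAt V (f t * (-(m + 2) * V t + (2 * m + 1) * (U t) ^ 2 - 3 * U t * V t)) t := by
  intro t ht
  have hmem := hIopen.mem_nhds ht
  have hft : f t ≠ 0 := (hfpos t ht).ne'
  have hd0 := hf.hasDerivAt_iteratedDeriv hIopen (k := 0) (by norm_num) ht
  have hd1 := hf.hasDerivAt_iteratedDeriv hIopen (k := 1) (by norm_num) ht
  have hd2 := hf.hasDerivAt_iteratedDeriv hIopen (k := 2) (by norm_num) ht
  simp only [iteratedDeriv_zero, iteratedDeriv_one, zero_add] at hd0 hd1 hd2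
  have hf''' : iteratedDeriv 3 f t
      = (2 * m + 1) * deriv f t ^ 2 - (m + 2) * f t * iteratedDeriv 2 f t := by
    linarith [hode t ht]
  constructor
  · refine ((hd1.div_pow 2 hd0 hft).congr_of_eventuallyEq
      (Filter.eventuallyEq_of_mem hmem hU)).congr_deriv ?_
    rw [hU t ht, hV t ht]
    field_simp
    ring
  · refine ((hd2.div_pow 3 hd0 hft).congr_of_eventuallyEq
      (Filter.eventuallyEq_of_mem hmem hV)).congr_deriv ?_
    rw [hU t ht, hV t ht, hf''']
    field_simp
    ring

/-- The blowing-up coordinates `u = f'/f²`, `v = f''/f³`, as functions of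
`s(t) = ∫_τ^t f`, satisfy `u̇ = v - 2u²`, `v̇ = -(m+2)v + (2m+1)u² - 3uv`.
Since `ds/dt = f(t) > 0`, this is equivalent to the chain-rule form
`dU/dt = f·(V - 2U²)`, `dV/dt = f·(-(m+2)V + (2m+1)U² - 3UV)` where
`U(t) = u(s(t))`, `V(t) = v(s(t))`. -/
theorem stmt_8 (m : ℝ) (I : Set ℝ) (hIopen : IsOpen I) (hI : I.OrdConnected)
    (τ : ℝ) (hτ : τ ∈ I)
    (f : ℝ → ℝ) (hf : ContDiffOn ℝ 3 f I) (hfpos : ∀ t ∈ I, 0 < f t)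
    (hode : ∀ t ∈ I, iteratedDeriv 3 f t + (m + 2) * f t * iteratedDeriv 2 f t
      - (2 * m + 1) * (deriv f t) ^ 2 = 0)
    (U V : ℝ → ℝ)
    (hU : ∀ t ∈ I, U t = deriv f t / (f t) ^ 2)
    (hV : ∀ t ∈ I, V t = iteratedDeriv 2 f t / (f t) ^ 3) :
    ∀ t ∈ I,
      HasDerivAt U (f t * (V t - 2 * (U t) ^ 2)) t ∧
      HasDerivAt V (f t * (-(m + 2) * V t + (2 * m + 1) * (U t) ^ 2 - 3 * U t * V t)) t :=
  stmt_8_general m I hIopen f hf hfpos hode U V hU hV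
end

section
/- Let m ≤ -2 and γ ≤ (2/(m+2)²)^{1/3} (with the convention that for m = -2 there is no constraint, i.e. for m = -2 take any γ). Then the problem f''' + (m+2) f f'' - (2m+1)(f')^2 = 0 on [0,∞), f(0) = -γ, f''(0) = -1, f'(∞) = 0 has no solution. In particular for m = -2 there is no solution for any γ ∈ ℝ. -/
/-!
Write `α = m + 2 ≤ 0` and `F = ∫₀ᵗ f`. Since `2m + 1 < 0`, the equation gives
`(f'' e^{αF})' = (2m+1) f'² e^{αF} ≤ 0`, so `f'' ≤ -e^{-αF} < 0`; as `f' → 0`, this forces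
`f' > 0`. If `f` became positive, `F → ∞` and then `f'' ≤ -1` eventually, contradicting `f' → 0`;
hence `-γ ≤ f ≤ 0`. The function `p = f' + α f²/2` is then bounded below, and its derivative
`H = f'' + α f f'` is strictly decreasing because `H' = (3m+3) f'² < 0`. A function bounded
below with decreasing derivative is nondecreasing, so `H ≥ 0`, whence `H(0) > 0`, and
`p(0) ≤ lim f' = 0`. At `t = 0` these read `-αγ f'(0) > 1` and `f'(0) ≤ -αγ²/2`, so `α²γ³ > 2`,
which is impossible both for `α = 0` and under `γ ≤ (2/α²)^{1/3}`.
-/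

open Set Filter Topology Real

section Calculus

variable {f f' : ℝ → ℝ} {a : ℝ}

lemma antitoneOn_Ici_of_hasDerivAt_nonpos_s9 (hf : ∀ x ≥ a, HasDerivAt f (f' x) x)
    (hf' : ∀ x ≥ a, f' x ≤ 0) : AntitoneOn f (Ici a) :=
  antitoneOn_of_hasDerivWithinAt_nonpos (convex_Ici a)
    (fun x hx => (hf x hx).continuousAt.continuousWithinAt)
    (fun x hx => by rw [interior_Ici] at hx ⊢; exact (hf x hx.le).hasDerivWithinAt)
    (fun x hx => by rw [interior_Ici] at hx; exact hf' x hx.le)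

lemma monotoneOn_Ici_of_hasDerivAt_nonneg_s9 (hf : ∀ x ≥ a, HasDerivAt f (f' x) x)
    (hf' : ∀ x ≥ a, 0 ≤ f' x) : MonotoneOn f (Ici a) :=
  monotoneOn_of_hasDerivWithinAt_nonneg (convex_Ici a)
    (fun x hx => (hf x hx).continuousAt.continuousWithinAt)
    (fun x hx => by rw [interior_Ici] at hx ⊢; exact (hf x hx.le).hasDerivWithinAt)
    (fun x hx => by rw [interior_Ici] at hx; exact hf' x hx.le)

lemma strictAntiOn_Ici_of_hasDerivAt_neg (hf : ∀ x ≥ a, HasDerivAt f (f' x) x)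
    (hf' : ∀ x ≥ a, f' x < 0) : StrictAntiOn f (Ici a) :=
  strictAntiOn_of_hasDerivWithinAt_neg (convex_Ici a)
    (fun x hx => (hf x hx).continuousAt.continuousWithinAt)
    (fun x hx => by rw [interior_Ici] at hx ⊢; exact (hf x hx.le).hasDerivWithinAt)
    (fun x hx => by rw [interior_Ici] at hx; exact hf' x hx.le)

lemma tendsto_atBot_of_hasDerivAt_le {c : ℝ} (hf : ∀ x ≥ a, HasDerivAt f (f' x) x)
    (hc : c < 0) (hf' : ∀ x ≥ a, f' x ≤ c) : Tendsto f atTop atBot := by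
  have hanti : AntitoneOn (fun x => f x - c * x) (Ici a) :=
    antitoneOn_Ici_of_hasDerivAt_nonpos_s9
      (fun x hx => (hf x hx).sub ((hasDerivAt_id x).const_mul c))
      (fun x hx => by linarith [hf' x hx])
  refine tendsto_atBot_mono' _ ?_
    (tendsto_atBot_add_const_left _ (f a - c * a) (tendsto_id.const_mul_atTop_of_neg hc))
  filter_upwards [eventually_ge_atTop a] with x hx
  have := hanti self_mem_Ici hx hx
  simp only [id] at this ⊢
  linarith

lemma tendsto_atTop_of_hasDerivAt_ge_s9 {c : ℝ} (hf : ∀ x ≥ a, HasDerivAt f (f' x) x)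
    (hc : 0 < c) (hf' : ∀ x ≥ a, c ≤ f' x) : Tendsto f atTop atTop := by
  rw [← tendsto_neg_atBot_iff]
  exact tendsto_atBot_of_hasDerivAt_le (fun x hx => (hf x hx).neg) (neg_lt_zero.2 hc)
    fun x hx => neg_le_neg (hf' x hx)

lemma nonneg_of_antitoneOn_deriv_of_bddBelow (hf : ∀ x ≥ a, HasDerivAt f (f' x) x)
    (hanti : AntitoneOn f' (Ici a)) (hbdd : BddBelow (f '' Ici a)) {x : ℝ} (hx : a ≤ x) :
    0 ≤ f' x := by
  by_contra! hneg
  obtain ⟨L, hL⟩ := hbdd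
  have htend : Tendsto f atTop atBot :=
    tendsto_atBot_of_hasDerivAt_le (a := x) (fun y hy => hf y (hx.trans hy)) hneg
      (fun y hy => hanti hx (hx.trans hy) hy)
  obtain ⟨y, hyL, hya⟩ :=
    ((htend.eventually (eventually_lt_atBot L)).and (eventually_ge_atTop a)).exists
  exact hyL.not_ge (hL ⟨y, hya, rfl⟩)

lemma StrictAntiOn.pos_of_tendsto_atTop_zero (hf : StrictAntiOn f (Ici a))
    (hlim : Tendsto f atTop (𝓝 0)) {x : ℝ} (hx : a ≤ x) : 0 < f x := by
  have hx1 : a ≤ x + 1 := by linarith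
  have : 0 ≤ f (x + 1) := le_of_tendsto hlim <| by
    filter_upwards [eventually_ge_atTop (x + 1)] with y hy
    exact hf.antitoneOn hx1 (hx1.trans hy) hy
  exact this.trans_lt (hf hx hx1 (lt_add_one x))

lemma antitoneOn_mul_exp_of_hasDerivAt {y y' A A' : ℝ → ℝ}
    (hy : ∀ t ≥ a, HasDerivAt y (y' t) t) (hA : ∀ t ≥ a, HasDerivAt A (A' t) t)
    (h : ∀ t ≥ a, y' t + A' t * y t ≤ 0) : AntitoneOn (fun t => y t * exp (A t)) (Ici a) :=
  antitoneOn_Ici_of_hasDerivAt_nonpos_s9 (fun t ht => (hy t ht).mul (hA t ht).exp) fun t ht =>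
    calc y' t * exp (A t) + y t * (exp (A t) * A' t) = (y' t + A' t * y t) * exp (A t) := by ring
      _ ≤ 0 := mul_nonpos_of_nonpos_of_nonneg (h t ht) (exp_pos _).le

end Calculus

structure IsSolution (m γ : ℝ) (f : ℝ → ℝ) : Prop where
  contDiff : ContDiff ℝ 3 f
  ode : ∀ t ≥ (0:ℝ), iteratedDeriv 3 f t + (m + 2) * f t * iteratedDeriv 2 f t
    - (2 * m + 1) * (deriv f t) ^ 2 = 0
  initial : f 0 = -γ
  initial_iteratedDeriv_two : iteratedDeriv 2 f 0 = -1
  tendsto_deriv : Tendsto (deriv f) atTop (𝓝 0)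

namespace IsSolution

variable {m γ : ℝ} {f : ℝ → ℝ} (hs : IsSolution m γ f)
include hs

lemma hasDerivAt (t : ℝ) : HasDerivAt f (deriv f t) t :=
  (hs.contDiff.differentiable (by norm_num) t).hasDerivAt

lemma hasDerivAt_deriv (t : ℝ) : HasDerivAt (deriv f) (iteratedDeriv 2 f t) t := by
  have h := (hs.contDiff.differentiable_iteratedDeriv 1 (by norm_num) t).hasDerivAt
  rwa [← iteratedDeriv_succ, iteratedDeriv_one] at h

lemma hasDerivAt_iteratedDeriv_two (t : ℝ) :
    HasDerivAt (iteratedDeriv 2 f) (iteratedDeriv 3 f t) t := by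
  have h := (hs.contDiff.differentiable_iteratedDeriv 2 (by norm_num) t).hasDerivAt
  rwa [← iteratedDeriv_succ] at h

lemma hasDerivAt_integral (t : ℝ) : HasDerivAt (fun t => ∫ s in (0:ℝ)..t, f s) (f t) t :=
  (hs.contDiff.continuous.integral_hasStrictDerivAt 0 t).hasDerivAt

lemma iteratedDeriv_two_le (hm : 2 * m + 1 ≤ 0) {t : ℝ} (ht : 0 ≤ t) :
    iteratedDeriv 2 f t ≤ -exp (-((m + 2) * ∫ s in (0:ℝ)..t, f s)) := by
  set A := (m + 2) * ∫ s in (0:ℝ)..t, f s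
  have hanti := antitoneOn_mul_exp_of_hasDerivAt (a := 0) (A' := fun t => (m + 2) * f t)
    (fun t _ => hs.hasDerivAt_iteratedDeriv_two t)
    (fun t _ => (hs.hasDerivAt_integral t).const_mul (m + 2))
    (fun t ht => by nlinarith [hs.ode t ht, sq_nonneg (deriv f t)])
  have hle : iteratedDeriv 2 f t * exp A ≤ -1 := by
    simpa [hs.initial_iteratedDeriv_two] using hanti self_mem_Ici ht ht
  calc iteratedDeriv 2 f t = iteratedDeriv 2 f t * exp A * exp (-A) := by
        rw [mul_assoc, ← exp_add, add_neg_cancel, exp_zero, mul_one]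
    _ ≤ -1 * exp (-A) := mul_le_mul_of_nonneg_right hle (exp_pos _).le
    _ = -exp (-A) := by ring

lemma deriv_pos (hm : 2 * m + 1 ≤ 0) {t : ℝ} (ht : 0 ≤ t) : 0 < deriv f t := by
  have hanti : StrictAntiOn (deriv f) (Ici 0) :=
    strictAntiOn_Ici_of_hasDerivAt_neg (fun t _ => hs.hasDerivAt_deriv t) fun _ ht =>
      (hs.iteratedDeriv_two_le hm ht).trans_lt (neg_neg_of_pos (exp_pos _))
  exact hanti.pos_of_tendsto_atTop_zero hs.tendsto_deriv ht

lemma monotoneOn (hm : 2 * m + 1 ≤ 0) : MonotoneOn f (Ici 0) :=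
  monotoneOn_Ici_of_hasDerivAt_nonneg_s9 (fun t _ => hs.hasDerivAt t) fun _ ht =>
    (hs.deriv_pos hm ht).le

lemma not_eventually_iteratedDeriv_two_le_neg_one : ¬ ∀ᶠ t in atTop, iteratedDeriv 2 f t ≤ -1 := by
  intro h
  obtain ⟨T, hT⟩ := eventually_atTop.1 h
  exact not_tendsto_nhds_of_tendsto_atBot (tendsto_atBot_of_hasDerivAt_le (a := T)
    (fun t _ => hs.hasDerivAt_deriv t) neg_one_lt_zero hT) 0 hs.tendsto_deriv

lemma nonpos (hm : m ≤ -2) {t : ℝ} (ht : 0 ≤ t) : f t ≤ 0 := by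
  by_contra! hpos
  have hF : Tendsto (fun t => ∫ s in (0:ℝ)..t, f s) atTop atTop :=
    tendsto_atTop_of_hasDerivAt_ge_s9 (a := t) (fun s _ => hs.hasDerivAt_integral s) hpos
      fun s hst => hs.monotoneOn (by linarith) ht (ht.trans hst) hst
  apply hs.not_eventually_iteratedDeriv_two_le_neg_one
  filter_upwards [hF.eventually_ge_atTop 0, eventually_ge_atTop 0] with s hFs hs0
  calc iteratedDeriv 2 f s ≤ -exp (-((m + 2) * ∫ u in (0:ℝ)..s, f u)) :=
        hs.iteratedDeriv_two_le (by linarith) hs0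
    _ ≤ -1 := neg_le_neg (one_le_exp (by nlinarith))

lemma sq_le (hm : m ≤ -2) {t : ℝ} (ht : 0 ≤ t) : f t ^ 2 ≤ γ ^ 2 := by
  have hγ : -γ ≤ f t := hs.initial ▸ hs.monotoneOn (by linarith) self_mem_Ici ht ht
  have hf : f t ≤ 0 := hs.nonpos hm ht
  exact sq_le_sq' hγ (by linarith)

lemma hasDerivAt_deriv_add_sq (t : ℝ) :
    HasDerivAt (fun t => deriv f t + (m + 2) / 2 * f t ^ 2)
      (iteratedDeriv 2 f t + (m + 2) * f t * deriv f t) t := by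
  refine ((hs.hasDerivAt_deriv t).fun_add
    (((hs.hasDerivAt t).fun_pow 2).const_mul ((m + 2) / 2))).congr_deriv ?_
  push_cast
  ring

lemma hasDerivAt_iteratedDeriv_two_add {t : ℝ} (ht : 0 ≤ t) :
    HasDerivAt (fun t => iteratedDeriv 2 f t + (m + 2) * f t * deriv f t)
      ((3 * m + 3) * deriv f t ^ 2) t := by
  refine ((hs.hasDerivAt_iteratedDeriv_two t).fun_add
    (((hs.hasDerivAt t).const_mul (m + 2)).fun_mul (hs.hasDerivAt_deriv t))).congr_deriv ?_
  linear_combination hs.ode t ht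

lemma strictAntiOn_iteratedDeriv_two_add (hm : m ≤ -2) :
    StrictAntiOn (fun t => iteratedDeriv 2 f t + (m + 2) * f t * deriv f t) (Ici 0) :=
  strictAntiOn_Ici_of_hasDerivAt_neg (fun _ ht => hs.hasDerivAt_iteratedDeriv_two_add ht)
    fun _ ht => mul_neg_of_neg_of_pos (by linarith) (pow_pos (hs.deriv_pos (by linarith) ht) 2)

lemma iteratedDeriv_two_add_nonneg (hm : m ≤ -2) {t : ℝ} (ht : 0 ≤ t) :
    0 ≤ iteratedDeriv 2 f t + (m + 2) * f t * deriv f t := by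
  refine nonneg_of_antitoneOn_deriv_of_bddBelow (fun t _ => hs.hasDerivAt_deriv_add_sq t)
    (hs.strictAntiOn_iteratedDeriv_two_add hm).antitoneOn ⟨(m + 2) / 2 * γ ^ 2, ?_⟩ ht
  rintro _ ⟨s, hs0, rfl⟩
  nlinarith [hs.deriv_pos (by linarith) hs0, hs.sq_le hm hs0]

theorem two_lt_sq_mul_pow_three (hm : m ≤ -2) : 2 < (m + 2) ^ 2 * γ ^ 3 := by
  have hH : 0 < iteratedDeriv 2 f 0 + (m + 2) * f 0 * deriv f 0 :=
    (hs.iteratedDeriv_two_add_nonneg hm zero_le_one).trans_lt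
      (hs.strictAntiOn_iteratedDeriv_two_add hm self_mem_Ici (mem_Ici.2 zero_le_one) one_pos)
  have hp : deriv f 0 + (m + 2) / 2 * f 0 ^ 2 ≤ 0 := by
    have hmono := monotoneOn_Ici_of_hasDerivAt_nonneg_s9 (a := 0)
      (fun t _ => hs.hasDerivAt_deriv_add_sq t) fun _ ht => hs.iteratedDeriv_two_add_nonneg hm ht
    refine ge_of_tendsto hs.tendsto_deriv ?_
    filter_upwards [eventually_ge_atTop 0] with t ht
    nlinarith [hmono self_mem_Ici ht ht, sq_nonneg (f t)]
  have hf' := hs.deriv_pos (by linarith) le_rfl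
  rw [hs.initial, hs.initial_iteratedDeriv_two] at hH
  rw [hs.initial] at hp
  have hγ : 0 < -(m + 2) * γ := by nlinarith
  nlinarith [mul_nonneg hγ.le (show 0 ≤ -(m + 2) / 2 * γ ^ 2 - deriv f 0 by linarith)]

end IsSolution

theorem stmt_9 (m γ : ℝ) (hm : m ≤ -2)
    (hγ : m = -2 ∨ γ ≤ (2 / (m + 2) ^ 2) ^ ((1:ℝ)/3)) :
    ¬ ∃ f : ℝ → ℝ, ContDiff ℝ 3 f ∧
      (∀ t ≥ (0:ℝ), iteratedDeriv 3 f t + (m + 2) * f t * iteratedDeriv 2 f t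
        - (2 * m + 1) * (deriv f t) ^ 2 = 0) ∧
      f 0 = -γ ∧ iteratedDeriv 2 f 0 = -1 ∧
      Filter.Tendsto (deriv f) Filter.atTop (nhds 0) := by
  rintro ⟨f, hf, hode, hf0, hf20, hlim⟩
  have key := IsSolution.two_lt_sq_mul_pow_three ⟨hf, hode, hf0, hf20, hlim⟩ hm
  rcases hγ with rfl | hγ
  · norm_num at key
  have hα : 0 < (m + 2) ^ 2 :=
    (sq_nonneg _).lt_of_ne fun h => by rw [← h, zero_mul] at key; norm_num at key
  have hcube : γ ^ 3 ≤ 2 / (m + 2) ^ 2 :=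
    calc γ ^ 3 ≤ ((2 / (m + 2) ^ 2) ^ ((1:ℝ)/3)) ^ 3 := (Odd.pow_le_pow (by decide)).2 hγ
      _ = 2 / (m + 2) ^ 2 := by
        rw [← rpow_natCast, ← rpow_mul (by positivity)]
        norm_num
  rw [le_div_iff₀ hα] at hcube
  linarith
end

section
/- Let γ < 0 and d = -1/γ + γ²/2. Then the explicit function f(t) = 2√(2d) / (((γ - √(2d))/(γ + √(2d))) e^{√(2d) t} - 1) + √(2d) satisfies f''' + f f'' + (f')² = 0 on [0,∞), with f(0) = -γ, f'(0) = -1/γ, f''(0) = -1, and f'(t) → 0 as t → ∞; moreover f is bounded. -/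
/-!
With `s = √(2d)` and `a = (γ - s)/(γ + s) < 0`, the function is `f t = s + 2s / (a e^{st} - 1)`,
which solves the Riccati equation `f' = (s² - f²)/2`. Differentiating twice, `f'' = -f f'` and
`f''' + f f'' + f'² = (f' + f²/2)'' = 0`. The initial values follow from `f 0 = -γ` and
`s² = γ² - 2/γ`; since `a e^{st} - 1 ≤ -1`, `|f| ≤ 3s` and `f → s`, so `f' → 0`.
-/

open Real Filter Topology

section Riccati

variable {f : ℝ → ℝ} {c : ℝ}

theorem deriv_eq_of_riccati (hf : ∀ t, HasDerivAt f ((c - f t ^ 2) / 2) t) :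
    deriv f = fun t => (c - f t ^ 2) / 2 :=
  funext fun t => (hf t).deriv

theorem hasDerivAt_deriv_of_riccati (hf : ∀ t, HasDerivAt f ((c - f t ^ 2) / 2) t) (t : ℝ) :
    HasDerivAt (deriv f) (-(f t * deriv f t)) t := by
  rw [deriv_eq_of_riccati hf]
  refine ((((hf t).fun_pow 2).const_sub c).div_const 2).congr_deriv ?_
  beta_reduce
  push_cast
  ring

theorem iteratedDeriv_two_eq_of_riccati (hf : ∀ t, HasDerivAt f ((c - f t ^ 2) / 2) t) :
    iteratedDeriv 2 f = fun t => -(f t * deriv f t) := by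
  rw [iteratedDeriv_succ, iteratedDeriv_one]
  exact funext fun t => (hasDerivAt_deriv_of_riccati hf t).deriv

theorem iteratedDeriv_three_add_of_riccati (hf : ∀ t, HasDerivAt f ((c - f t ^ 2) / 2) t)
    (t : ℝ) : iteratedDeriv 3 f t + f t * iteratedDeriv 2 f t + deriv f t ^ 2 = 0 := by
  have h := ((hf t).fun_mul (hasDerivAt_deriv_of_riccati hf t)).fun_neg
  rw [iteratedDeriv_succ, iteratedDeriv_two_eq_of_riccati hf, h.deriv]
  beta_reduce
  rw [(hf t).deriv]
  ring

end Riccati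

noncomputable def riccatiSol (s a t : ℝ) : ℝ :=
  2 * s / (a * exp (s * t) - 1) + s

section RiccatiSol

variable {s a : ℝ}

theorem riccatiSol_denom_le (ha : a ≤ 0) (t : ℝ) : a * exp (s * t) - 1 ≤ -1 := by
  nlinarith [exp_pos (s * t)]

theorem hasDerivAt_riccatiSol (ha : a ≤ 0) (t : ℝ) :
    HasDerivAt (riccatiSol s a) ((s ^ 2 - riccatiSol s a t ^ 2) / 2) t := by
  have hD : a * exp (s * t) - 1 ≠ 0 := by linarith [riccatiSol_denom_le (s := s) ha t]
  have hexp : HasDerivAt (fun t => a * exp (s * t) - 1) (a * (exp (s * t) * s)) t :=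
    (((hasDerivAt_id t).const_mul s).exp.const_mul a).sub_const 1 |>.congr_deriv (by simp)
  refine ((hasDerivAt_const t (2 * s)).div hexp hD).add_const s |>.congr_deriv ?_
  unfold riccatiSol
  field_simp
  ring

theorem abs_riccatiSol_le (hs : 0 ≤ s) (ha : a ≤ 0) (t : ℝ) : |riccatiSol s a t| ≤ 3 * s := by
  have hD := riccatiSol_denom_le (s := s) ha t
  have h : |2 * s / (a * exp (s * t) - 1)| ≤ 2 * s := by
    rw [abs_div, abs_of_nonneg (by positivity), abs_of_neg (by linarith)]
    exact div_le_self (by positivity) (by linarith)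
  calc |riccatiSol s a t| ≤ |2 * s / (a * exp (s * t) - 1)| + |s| := abs_add_le _ _
    _ ≤ 3 * s := by rw [abs_of_nonneg hs]; linarith

theorem tendsto_riccatiSol_atTop (hs : 0 < s) (ha : a < 0) :
    Tendsto (riccatiSol s a) atTop (𝓝 s) := by
  have hD : Tendsto (fun t => a * exp (s * t) - 1) atTop atBot :=
    tendsto_atBot_add_const_right _ _ <| (tendsto_exp_atTop.comp
      (tendsto_id.const_mul_atTop hs)).const_mul_atTop_of_neg ha
  have h := (hD.const_div_atBot (2 * s)).add_const s
  rwa [zero_add] at h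

theorem riccatiSol_zero {γ : ℝ} (hγs : γ + s ≠ 0) (hs : s ≠ 0) :
    riccatiSol s ((γ - s) / (γ + s)) 0 = -γ := by
  have h : (γ - s) / (γ + s) - 1 ≠ 0 := by
    rw [div_sub_one hγs]; exact div_ne_zero (by intro h; apply hs; linarith) hγs
  unfold riccatiSol
  rw [mul_zero, exp_zero, mul_one, div_add' _ _ _ h, div_eq_iff h]
  field_simp
  ring

end RiccatiSol

theorem stmt_14 (γ : ℝ) (hγ : γ < 0) (d : ℝ) (hd : d = -1/γ + γ ^ 2 / 2)
    (f : ℝ → ℝ)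
    (hfdef : ∀ t : ℝ, f t = 2 * Real.sqrt (2 * d) /
      (((γ - Real.sqrt (2 * d)) / (γ + Real.sqrt (2 * d))) * Real.exp (Real.sqrt (2 * d) * t) - 1)
      + Real.sqrt (2 * d)) :
    (∀ t ≥ (0:ℝ), iteratedDeriv 3 f t + f t * iteratedDeriv 2 f t + (deriv f t) ^ 2 = 0) ∧
    f 0 = -γ ∧ deriv f 0 = -1/γ ∧ iteratedDeriv 2 f 0 = -1 ∧
    Filter.Tendsto (deriv f) Filter.atTop (nhds 0) ∧
    ∃ C : ℝ, ∀ t ≥ (0:ℝ), |f t| ≤ C := by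
  have hγinv : 0 < -1 / γ := div_pos_of_neg_of_neg (by norm_num) hγ
  have h2d : 0 < 2 * d := by
    rw [hd]; linarith [sq_nonneg γ]
  set s := √(2 * d)
  have hs : 0 < s := sqrt_pos.2 h2d
  have hs2 : s ^ 2 = 2 * d := sq_sqrt h2d.le
  have hγs : 0 < γ + s := by
    by_contra! h
    nlinarith
  have ha : (γ - s) / (γ + s) < 0 := div_neg_of_neg_of_pos (by linarith) hγs
  obtain rfl : f = riccatiSol s ((γ - s) / (γ + s)) := funext hfdef
  have hric := hasDerivAt_riccatiSol (s := s) ha.le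
  have hf0 := riccatiSol_zero hγs.ne' hs.ne'
  have hf'0 : deriv (riccatiSol s ((γ - s) / (γ + s))) 0 = -1 / γ := by
    rw [(hric 0).deriv, hf0, hs2, hd]
    field_simp
    ring
  refine ⟨fun t _ => iteratedDeriv_three_add_of_riccati hric t, hf0, hf'0, ?_, ?_,
    3 * s, fun t _ => abs_riccatiSol_le hs.le ha.le t⟩
  · simp only [iteratedDeriv_two_eq_of_riccati hric, hf0, hf'0]
    field_simp [hγ.ne]
  · rw [deriv_eq_of_riccati hric]
    have h := (((tendsto_riccatiSol_atTop hs ha).pow 2).const_sub (s ^ 2)).div_const 2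
    rwa [sub_self, zero_div] at h
end
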